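/- arXiv:1502.03863 — 4 statements merged into one kernel-verified Lean document; each statement's English description precedes it below -/
import Mathlib

section
/- Let $a_1, \dots, a_n$ be integers all $\leq -2$ and let $M$ be the tridiagonal matrix with diagonal $(a_1,\dots,a_n)$ and off-diagonal entries $1$. Then $\det M \neq 0$, and the ratio $\det M / \det M'$, where $M'$ is obtained by deleting the first row and column, equals the continued fraction $[a_1,\dots,a_n]^-$. -/
/-!
Expanding `det M` along its first row and then its first column gives the continuant recursion
`det M = a₁ det M' - det M''`, which is also the recursion of the numerators of `[a₁,…,aₙ]⁻`.
When all `aᵢ ≤ -2`, every tail `[aₖ,…,aₙ]⁻` is `≤ -1`, hence nonzero, so inductively the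
continuant of `a₁,…,aₙ` is `[a₁,…,aₙ]⁻` times the continuant of `a₂,…,aₙ`, and none of them vanish.
-/

open Matrix

/-- The negative continued fraction `[a₁,…,aₙ]⁻`, computed in `ℚ`. -/
def ncf : List ℤ → ℚ
  | [] => 0
  | a :: l => (a : ℚ) - 1 / ncf l

/-- The intersection matrix of the connected linear plumbing graph with weights
`a 0, …, a n`: tridiagonal with diagonal `a` and off-diagonal entries `1`. -/
def triMat (n : ℕ) (a : Fin n → ℤ) : Matrix (Fin n) (Fin n) ℚ :=
  Matrix.of fun i j =>
    if i = j then (a i : ℚ)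
    else if (i : ℕ) + 1 = j ∨ (j : ℕ) + 1 = i then 1 else 0

namespace Matrix

variable {R : Type*} [CommRing R]

theorem det_succ_succ_of_row_col_zero {n : ℕ} (A : Matrix (Fin (n + 2)) (Fin (n + 2)) R)
    (hrow : ∀ j : Fin n, A 0 j.succ.succ = 0) (hcol : ∀ i : Fin n, A i.succ.succ 0 = 0) :
    A.det = A 0 0 * (A.submatrix Fin.succ Fin.succ).det
      - A 0 1 * A 1 0 * ((A.submatrix Fin.succ Fin.succ).submatrix Fin.succ Fin.succ).det := by
  have hsucc : Fin.succAbove (1 : Fin (n + 2)) ∘ Fin.succ = Fin.succ ∘ Fin.succ :=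
    funext (Fin.succ_succAbove_succ 0)
  have hminor : (A.submatrix Fin.succ (Fin.succAbove 1)).det
      = A 1 0 * ((A.submatrix Fin.succ Fin.succ).submatrix Fin.succ Fin.succ).det := by
    rw [det_succ_column_zero, Fin.sum_univ_succ]
    simp [hcol, hsucc]
  rw [det_succ_row_zero, Fin.sum_univ_succ, Fin.sum_univ_succ]
  simp [hrow, hminor]
  ring

end Matrix

theorem triMat_submatrix_succ (n : ℕ) (a : Fin (n + 1) → ℤ) :
    (triMat (n + 1) a).submatrix Fin.succ Fin.succ = triMat n (a ∘ Fin.succ) := by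
  ext i j
  simp only [triMat, submatrix_apply, of_apply, Function.comp_apply, Fin.succ_inj, Fin.val_succ]
  congr 2
  simp only [add_left_inj]

theorem det_triMat_add_two (n : ℕ) (a : Fin (n + 2) → ℤ) :
    (triMat (n + 2) a).det = (a 0 : ℚ) * (triMat (n + 1) (a ∘ Fin.succ)).det
      - (triMat n (a ∘ Fin.succ ∘ Fin.succ)).det := by
  rw [det_succ_succ_of_row_col_zero, triMat_submatrix_succ, triMat_submatrix_succ]
  · simp [triMat]
  · intro j
    simp [triMat, Fin.ext_iff]
  · intro i
    simp [triMat, Fin.ext_iff]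

def negContinuant : List ℤ → ℚ
  | [] => 1
  | [a] => a
  | a :: b :: l => a * negContinuant (b :: l) - negContinuant l

theorem det_triMat (n : ℕ) (a : Fin n → ℤ) : (triMat n a).det = negContinuant (List.ofFn a) := by
  induction n using Nat.twoStepInduction with
  | zero => simp [negContinuant]
  | one => simp [triMat, negContinuant]
  | more n ih₀ ih₁ =>
    rw [det_triMat_add_two, ih₁, ih₀, List.ofFn_succ (f := a), List.ofFn_succ (f := fun i => a i.succ), negContinuant,
      List.ofFn_succ (f := a ∘ Fin.succ)]
    rfl

theorem ncf_le_neg_one {l : List ℤ} (h : ∀ x ∈ l, x ≤ -2) (hl : l ≠ []) : ncf l ≤ -1 := by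
  induction l with
  | nil => contradiction
  | cons a l ih =>
    obtain ⟨ha, htail⟩ := List.forall_mem_cons.1 h
    have hinv : -1 ≤ 1 / ncf l := by
      rcases eq_or_ne l [] with rfl | hne
      · simp [ncf] -- `1 / ncf [] = 1 / 0 = 0` in `ℚ`
      · have hcf := ih htail hne
        rw [le_div_iff_of_neg (by linarith)]
        linarith
    have ha' : (a : ℚ) ≤ -2 := by exact_mod_cast ha
    rw [ncf]
    linarith

theorem ncf_ne_zero {l : List ℤ} (h : ∀ x ∈ l, x ≤ -2) (hl : l ≠ []) : ncf l ≠ 0 :=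
  ((ncf_le_neg_one h hl).trans_lt (by norm_num)).ne

theorem negContinuant_cons_eq_ncf_mul (a : ℤ) {l : List ℤ} (h : ∀ x ∈ l, x ≤ -2) :
    negContinuant (a :: l) = ncf (a :: l) * negContinuant l := by
  induction l generalizing a with
  | nil => simp [negContinuant, ncf]
  | cons b m ih =>
    have hb := ncf_ne_zero h (List.cons_ne_nil b m)
    rw [negContinuant, ncf, ih b (List.forall_mem_cons.1 h).2]
    field_simp

theorem negContinuant_ne_zero {l : List ℤ} (h : ∀ x ∈ l, x ≤ -2) : negContinuant l ≠ 0 := by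
  induction l with
  | nil => exact one_ne_zero
  | cons a l ih =>
    have htail := (List.forall_mem_cons.1 h).2
    rw [negContinuant_cons_eq_ncf_mul a htail]
    exact mul_ne_zero (ncf_ne_zero h (List.cons_ne_nil a l)) (ih htail)

theorem ncf_cons_eq_div (a : ℤ) {l : List ℤ} (h : ∀ x ∈ l, x ≤ -2) :
    ncf (a :: l) = negContinuant (a :: l) / negContinuant l := by
  rw [negContinuant_cons_eq_ncf_mul a h, mul_div_cancel_right₀ _ (negContinuant_ne_zero h)]

/-- for integers `a₁,…,a_{n+1} ≤ -2`, the tridiagonal intersection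
matrix `M` has nonzero determinant and `det M / det M' = [a₁,…,a_{n+1}]⁻`,
where `M'` is obtained from `M` by deleting the first row and column
(when `n = 0`, `M'` is the empty matrix with `det M' = 1`). -/
theorem stmt_4 (n : ℕ) (a : Fin (n + 1) → ℤ) (hle : ∀ i, a i ≤ -2) :
    (triMat (n + 1) a).det ≠ 0 ∧
      (triMat (n + 1) a).det /
        ((triMat (n + 1) a).submatrix Fin.succ Fin.succ).det = ncf (List.ofFn a) := by
  rw [triMat_submatrix_succ, det_triMat, det_triMat]
  refine ⟨negContinuant_ne_zero (List.forall_mem_ofFn_iff.2 hle), ?_⟩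
  rw [List.ofFn_succ, ncf_cons_eq_div _ (List.forall_mem_ofFn_iff.2 fun i => hle i.succ)]
  rfl
end

section
/- Two strings of integers $(a_1,\dots,a_n)$ and $(b_1,\dots,b_m)$ with all entries $\leq -2$ satisfy $1/[a_1,\dots,a_n]^- + 1/[b_1,\dots,b_m]^- = -1$ if and only if the tridiagonal intersection matrix of the linear graph with weights $(b_m, \dots, b_1, -1, a_1, \dots, a_n)$ has determinant zero. -/
/-!
The determinant of the intersection matrix of a linear graph is the continuant `K` of its
weights, which obeys `K (c :: l) = c * K l - K l.tail` and satisfies `[l]⁻ = K l / K l.tail`.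
Reading `(b_m, …, b₁, -1, a₁, …, aₙ)` as `b.reverse ++ (-1 :: a)` and splitting the continuant
there gives `-(K a * K b + K a.tail * K b + K a * K b.tail)`, which vanishes exactly when
`K a.tail / K a + K b.tail / K b = -1`. Entries `≤ -2` force `|K l.tail| < |K l|`, so the
denominators are nonzero.
-/

open Matrix

/-- The intersection matrix of the connected linear graph with weights given by
the list `l`: tridiagonal with diagonal `l` and sub/super-diagonal entries `1`. -/
def triMatL (l : List ℤ) : Matrix (Fin l.length) (Fin l.length) ℚ :=
  Matrix.of fun i j =>
    if i = j then (l.get i : ℚ)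
    else if (i : ℕ) + 1 = j ∨ (j : ℕ) + 1 = i then 1 else 0

lemma det_succ_succ_of_row_zero_col_zero {R : Type*} [CommRing R] {n : ℕ}
    (M : Matrix (Fin (n + 2)) (Fin (n + 2)) R)
    (hrow : ∀ j : Fin n, M 0 j.succ.succ = 0) (hcol : ∀ i : Fin n, M i.succ.succ 0 = 0) :
    M.det = M 0 0 * (M.submatrix Fin.succ Fin.succ).det
      - M 0 1 * M 1 0 * ((M.submatrix Fin.succ Fin.succ).submatrix Fin.succ Fin.succ).det := by
  have hminor : (M.submatrix Fin.succ (Fin.succAbove 1)).det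
      = M 1 0 * ((M.submatrix Fin.succ Fin.succ).submatrix Fin.succ Fin.succ).det := by
    have hcols : Fin.succAbove (1 : Fin (n + 2)) ∘ Fin.succ = Fin.succ ∘ Fin.succ := by
      funext j
      exact Fin.succ_succAbove_succ 0 j
    rw [det_succ_column_zero, Fin.sum_univ_succ]
    simp [hcol, hcols, submatrix_submatrix]
  rw [det_succ_row_zero, Fin.sum_univ_succ, Fin.sum_univ_succ]
  simp only [Fin.coe_ofNat_eq_mod, Nat.zero_mod, pow_zero, one_mul, Fin.succAbove_zero,
    Fin.succ_zero_eq_one, Nat.one_mod, pow_one, neg_mul, hminor, Fin.val_succ, hrow, mul_zero,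
    zero_mul, Finset.sum_const_zero, add_zero]
  ring

lemma triMatL_cons_submatrix_succ (c : ℤ) (l : List ℤ) :
    (triMatL (c :: l)).submatrix Fin.succ Fin.succ = triMatL l := by
  ext i j
  simp [triMatL, Fin.ext_iff]

lemma det_triMatL_cons_cons (c d : ℤ) (l : List ℤ) :
    (triMatL (c :: d :: l)).det = c * (triMatL (d :: l)).det - (triMatL l).det := by
  rw [det_succ_succ_of_row_zero_col_zero (n := l.length) (triMatL (c :: d :: l)),
    triMatL_cons_submatrix_succ, triMatL_cons_submatrix_succ]
  · simp [triMatL]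
  · intro j
    simp [triMatL, Fin.ext_iff]
  · intro i
    simp [triMatL, Fin.ext_iff]

lemma det_triMatL_reverse (l : List ℤ) : (triMatL l.reverse).det = (triMatL l).det := by
  rw [← det_submatrix_equiv_self ((finCongr l.length_reverse).trans Fin.revPerm)]
  congr 1
  ext i j
  have hi : (i : ℕ) < l.length := by simpa using i.isLt
  have hj : (j : ℕ) < l.length := by simpa using j.isLt
  simp only [triMatL, Fin.ext_iff, List.get_eq_getElem, List.getElem_reverse, of_apply,
    Equiv.coe_trans, submatrix_apply, Function.comp_apply, finCongr_apply, Fin.revPerm_apply,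
    Fin.val_rev, Fin.val_cast]
  split_ifs <;> grind

def continuantStep (c : ℤ) (p : ℚ × ℚ) : ℚ × ℚ := (c * p.1 - p.2, p.1)

/-- `continuants l = (K l, K l.tail)` for the continuant `K` of `l`, except that the second
component is `0` for `l = []`. -/
def continuants (l : List ℤ) : ℚ × ℚ := l.foldr continuantStep (1, 0)

@[simp] lemma continuants_nil : continuants [] = (1, 0) := rfl

@[simp] lemma continuants_cons (c : ℤ) (l : List ℤ) :
    continuants (c :: l) = (c * (continuants l).1 - (continuants l).2, (continuants l).1) :=
  rfl

lemma det_triMatL (l : List ℤ) : (triMatL l).det = (continuants l).1 := by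
  induction l using List.twoStepInduction with
  | nil => exact det_fin_zero
  | singleton c => simp [triMatL]
  | cons_cons c d l ih ih' => rw [det_triMatL_cons_cons, ih' d, ih]; rfl

lemma continuants_reverse_fst (l : List ℤ) :
    (continuants l.reverse).1 = (continuants l).1 := by
  rw [← det_triMatL, ← det_triMatL, det_triMatL_reverse]

lemma foldr_continuantStep (x : List ℤ) (u v : ℚ) :
    x.foldr continuantStep (u, v) = u • continuants x + v • x.foldr continuantStep (0, 1) := by
  induction x with
  | nil => ext <;> simp
  | cons c x ih =>
    simp only [List.foldr_cons, ih, continuantStep, continuants_cons]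
    ext <;> simp only [continuants, Prod.fst_add, Prod.smul_fst, Prod.snd_add, Prod.smul_snd,
      smul_eq_mul]
    ring

lemma continuants_reverse_append_fst (x y : List ℤ) :
    (continuants (x.reverse ++ y)).1
      = (continuants x).1 * (continuants y).1 - (continuants x).2 * (continuants y).2 := by
  have hsnd : (x.reverse.foldr continuantStep (0, 1)).1 = -(continuants x).2 := by
    cases x with
    | nil => rfl
    | cons c x =>
      have hstep : continuantStep c (0, 1) = (-1, 0) := by simp [continuantStep]
      rw [List.reverse_cons, List.foldr_append, List.foldr_cons, List.foldr_nil, hstep,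
        foldr_continuantStep]
      simp [continuants_reverse_fst]
  rw [continuants, List.foldr_append, ← continuants, foldr_continuantStep, Prod.fst_add,
    Prod.smul_fst, Prod.smul_fst, hsnd, continuants_reverse_fst, smul_eq_mul, smul_eq_mul]
  ring

lemma abs_continuants_snd_lt_fst {l : List ℤ} (hl : ∀ x ∈ l, x ≤ -2) :
    |(continuants l).2| < |(continuants l).1| := by
  induction l with
  | nil => simp
  | cons c l ih =>
    have hc : (2 : ℚ) ≤ |(c : ℚ)| := by
      rw [abs_of_neg (by exact_mod_cast (hl c (by simp)).trans_lt (by norm_num))]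
      exact_mod_cast neg_le_neg (hl c (by simp))
    have ih := ih fun x hx => hl x (List.mem_cons_of_mem c hx)
    calc |(continuants (c :: l)).2| = |(continuants l).1| := rfl
      _ < |(c : ℚ)| * |(continuants l).1| - |(continuants l).2| := by
        nlinarith [abs_nonneg (continuants l).2]
      _ ≤ |(continuants (c :: l)).1| := by
        rw [continuants_cons, ← abs_mul]
        exact abs_sub_abs_le_abs_sub _ _

lemma continuants_fst_ne_zero {l : List ℤ} (hl : ∀ x ∈ l, x ≤ -2) : (continuants l).1 ≠ 0 :=
  abs_pos.mp ((abs_nonneg _).trans_lt (abs_continuants_snd_lt_fst hl))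

-- For `l = []` both sides are `0`, the right one because `1 / 0 = 0`.
lemma ncf_eq_div {l : List ℤ} (hl : ∀ x ∈ l, x ≤ -2) :
    ncf l = (continuants l).1 / (continuants l).2 := by
  induction l with
  | nil => simp [ncf]
  | cons c l ih =>
    have hl' : ∀ x ∈ l, x ≤ -2 := fun x hx => hl x (List.mem_cons_of_mem c hx)
    rw [ncf, ih hl', one_div_div, continuants_cons]
    field_simp [continuants_fst_ne_zero hl']

theorem stmt_5_general (a b : List ℤ)
    (hlea : ∀ x ∈ a, x ≤ -2) (hleb : ∀ x ∈ b, x ≤ -2) :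
    1 / ncf a + 1 / ncf b = -1 ↔ (triMatL (b.reverse ++ [-1] ++ a)).det = 0 := by
  have hKa := continuants_fst_ne_zero hlea
  have hKb := continuants_fst_ne_zero hleb
  rw [ncf_eq_div hlea, ncf_eq_div hleb, one_div_div, one_div_div, div_add_div _ _ hKa hKb,
    div_eq_iff (mul_ne_zero hKa hKb), det_triMatL, List.append_assoc, List.singleton_append,
    continuants_reverse_append_fst, continuants_cons]
  constructor <;> intro h <;> linear_combination -h

/-- for strings `(a₁,…,aₙ)` and `(b₁,…,b_m)` with all entries
`≤ -2`, one has `1/[a₁,…,aₙ]⁻ + 1/[b₁,…,b_m]⁻ = -1` iff the intersection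
matrix of the linear graph with weights `(b_m,…,b₁,-1,a₁,…,aₙ)` has
determinant zero. -/
theorem stmt_5 (a b : List ℤ) (ha : a ≠ []) (hb : b ≠ [])
    (hlea : ∀ x ∈ a, x ≤ -2) (hleb : ∀ x ∈ b, x ≤ -2) :
    1 / ncf a + 1 / ncf b = -1 ↔ (triMatL (b.reverse ++ [-1] ++ a)).det = 0 :=
  stmt_5_general a b hlea hleb
end

section
/- Define $I(a_1,\dots,a_n) = \sum_{i=1}^n (-3 - a_i)$ for a string of integers. If $(a_1,\dots,a_n)$ and $(b_1,\dots,b_m)$ are complementary strings (all entries $\leq -2$ and $1/[a_1,\dots,a_n]^- + 1/[b_1,\dots,b_m]^- = -1$), then $I(a_1,\dots,a_n) + I(b_1,\dots,b_m) = -2$. -/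
/-- `I(a₁,…,aₙ) = ∑ᵢ (-3 - aᵢ)`. -/
def Istr (l : List ℤ) : ℤ := (l.map fun x => -3 - x).sum

lemma Istr_cons (x : ℤ) (l : List ℤ) : Istr (x :: l) = -3 - x + Istr l := by
  simp [Istr]

lemma ncf_cons (x : ℤ) (l : List ℤ) : ncf (x :: l) = x - 1 / ncf l := rfl

lemma ncf_cons_add_one (x : ℤ) (l : List ℤ) : ncf ((x + 1) :: l) = ncf (x :: l) + 1 := by
  push_cast [ncf_cons]
  ring

lemma one_div_mem_Ioo_of_lt_neg_one {K : Type*} [Field K] [LinearOrder K] [IsStrictOrderedRing K]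
    {q : K} (hq : q < -1) : 1 / q ∈ Set.Ioo (-1) 0 :=
  ⟨by simpa using one_div_lt_one_div_of_neg_of_lt (by norm_num) hq,
    one_div_neg.mpr (hq.trans (by norm_num))⟩

lemma ncf_lt_neg_one {l : List ℤ} (hne : l ≠ []) (hle : ∀ x ∈ l, x ≤ -2) : ncf l < -1 := by
  induction l with
  | nil => exact absurd rfl hne
  | cons x t ih =>
    have hx : (x : ℚ) ≤ -2 := by exact_mod_cast hle x List.mem_cons_self
    rcases eq_or_ne t [] with rfl | ht
    · simp only [ncf, div_zero, sub_zero]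
      linarith
    · have := one_div_mem_Ioo_of_lt_neg_one (ih ht fun y hy => hle y (List.mem_cons_of_mem x hy))
      rw [ncf_cons]
      linarith [this.1]

lemma one_div_ncf_mem_Ioc {l : List ℤ} (hle : ∀ x ∈ l, x ≤ -2) : 1 / ncf l ∈ Set.Ioc (-1) 0 := by
  rcases eq_or_ne l [] with rfl | hne
  · simp [ncf]
  · exact Set.Ioo_subset_Ioc_self (one_div_mem_Ioo_of_lt_neg_one (ncf_lt_neg_one hne hle))

lemma le_ncf_cons (x : ℤ) {l : List ℤ} (hle : ∀ y ∈ l, y ≤ -2) : (x : ℚ) ≤ ncf (x :: l) := by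
  linarith [ncf_cons x l, (one_div_ncf_mem_Ioc hle).2]

lemma ncf_cons_lt (x : ℤ) {l : List ℤ} (hle : ∀ y ∈ l, y ≤ -2) : ncf (x :: l) < x + 1 := by
  linarith [ncf_cons x l, (one_div_ncf_mem_Ioc hle).1]

lemma lt_ncf_cons (x : ℤ) {l : List ℤ} (hne : l ≠ []) (hle : ∀ y ∈ l, y ≤ -2) :
    (x : ℚ) < ncf (x :: l) := by
  linarith [ncf_cons x l, (one_div_mem_Ioo_of_lt_neg_one (ncf_lt_neg_one hne hle)).2]

structure Complementary (a b : List ℤ) : Prop where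
  left_ne_nil : a ≠ []
  right_ne_nil : b ≠ []
  left_le : ∀ x ∈ a, x ≤ -2
  right_le : ∀ x ∈ b, x ≤ -2
  mul_eq_one : (ncf a + 1) * (ncf b + 1) = 1

namespace Complementary

variable {a b : List ℤ}

lemma of_one_div_add_one_div (ha : a ≠ []) (hb : b ≠ []) (hlea : ∀ x ∈ a, x ≤ -2)
    (hleb : ∀ x ∈ b, x ≤ -2) (hcomp : 1 / ncf a + 1 / ncf b = -1) : Complementary a b := by
  refine ⟨ha, hb, hlea, hleb, ?_⟩
  have hα : ncf a ≠ 0 := ((ncf_lt_neg_one ha hlea).trans (by norm_num)).ne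
  have hβ : ncf b ≠ 0 := ((ncf_lt_neg_one hb hleb).trans (by norm_num)).ne
  field_simp at hcomp
  linear_combination hcomp

lemma symm (h : Complementary a b) : Complementary b a :=
  ⟨h.right_ne_nil, h.left_ne_nil, h.right_le, h.left_le, by rw [mul_comm]; exact h.mul_eq_one⟩

lemma head_eq_neg_two_or {x y : ℤ} (h : Complementary (x :: a) (y :: b)) : x = -2 ∨ y = -2 := by
  by_contra! hxy
  have hx : (x : ℚ) + 1 ≤ -2 := by
    have := h.left_le x List.mem_cons_self
    exact_mod_cast (show x + 1 ≤ -2 by omega)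
  have hy : (y : ℚ) + 1 ≤ -2 := by
    have := h.right_le y List.mem_cons_self
    exact_mod_cast (show y + 1 ≤ -2 by omega)
  have hα := ncf_cons_lt x fun z hz => h.left_le z (List.mem_cons_of_mem x hz)
  have hβ := ncf_cons_lt y fun z hz => h.right_le z (List.mem_cons_of_mem y hz)
  nlinarith [h.mul_eq_one]

lemma eq_singleton_of_left (h : Complementary [-2] b) : b = [-2] := by
  obtain ⟨y, t, rfl⟩ := List.exists_cons_of_ne_nil h.right_ne_nil
  have ht : ∀ z ∈ t, z ≤ -2 := fun z hz => h.right_le z (List.mem_cons_of_mem y hz)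
  have hβ : ncf (y :: t) = -2 := by
    have := h.mul_eq_one
    rw [show ncf [(-2 : ℤ)] = -2 by simp [ncf]] at this
    linarith
  have hy : -2 < (y : ℚ) + 1 := hβ ▸ ncf_cons_lt y ht
  rcases eq_or_ne t [] with rfl | hne
  · simp only [ncf, div_zero, sub_zero] at hβ
    rw [show y = -2 by exact_mod_cast hβ]
  · have hy' : (y : ℚ) < -2 := hβ ▸ lt_ncf_cons y hne ht
    have : -3 < y := by exact_mod_cast (by linarith : (-3 : ℚ) < y)
    have : y < -2 := by exact_mod_cast hy'
    omega

lemma tail {y : ℤ} (h : Complementary (-2 :: a) (y :: b)) (ha : a ≠ []) :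
    Complementary a ((y + 1) :: b) := by
  have hlea : ∀ x ∈ a, x ≤ -2 := fun x hx => h.left_le x (List.mem_cons_of_mem _ hx)
  have hleb : ∀ x ∈ b, x ≤ -2 := fun x hx => h.right_le x (List.mem_cons_of_mem y hx)
  have hu := ncf_lt_neg_one ha hlea
  have hu' := one_div_mem_Ioo_of_lt_neg_one hu
  have hu0 : ncf a ≠ 0 := (hu.trans (by norm_num)).ne
  have hmul := h.mul_eq_one
  rw [ncf_cons] at hmul
  push_cast at hmul
  have hβ : ncf (y :: b) < -2 := by nlinarith [hu'.1, hu'.2]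
  have hy : y ≤ -3 := by
    have : (y : ℚ) < -2 := (le_ncf_cons y hleb).trans_lt hβ
    have : y < -2 := by exact_mod_cast this
    omega
  refine ⟨ha, List.cons_ne_nil _ _, hlea, ?_, ?_⟩
  · exact List.forall_mem_cons.2 ⟨by omega, hleb⟩
  · rw [ncf_cons_add_one]
    field_simp at hmul
    linear_combination -hmul

theorem Istr_add_Istr (h : Complementary a b) : Istr a + Istr b = -2 := by
  induction hn : a.length + b.length using Nat.strong_induction_on generalizing a b with
  | _ n ih =>
  wlog ha : ∃ a', a = -2 :: a' generalizing a b with H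
  · obtain ⟨x, a', rfl⟩ := List.exists_cons_of_ne_nil h.left_ne_nil
    obtain ⟨y, b', rfl⟩ := List.exists_cons_of_ne_nil h.right_ne_nil
    have hy : y = -2 := h.head_eq_neg_two_or.resolve_left fun hx => ha ⟨a', by rw [hx]⟩
    rw [add_comm]
    exact H h.symm (by rw [← hn, add_comm]) ⟨b', by rw [hy]⟩
  obtain ⟨a', rfl⟩ := ha
  obtain ⟨y, b', rfl⟩ := List.exists_cons_of_ne_nil h.right_ne_nil
  rcases eq_or_ne a' [] with rfl | ha'
  · rw [h.eq_singleton_of_left]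
    rfl
  · have := ih _ (by simp only [List.length_cons] at hn ⊢; omega) (h.tail ha') rfl
    simp only [Istr_cons] at this ⊢
    omega

end Complementary

/-- if `(a₁,…,aₙ)` and `(b₁,…,b_m)` are complementary strings
(all entries `≤ -2` and `1/[a]⁻ + 1/[b]⁻ = -1`), then `I(a) + I(b) = -2`. -/
theorem stmt_6 (a b : List ℤ) (ha : a ≠ []) (hb : b ≠ [])
    (hlea : ∀ x ∈ a, x ≤ -2) (hleb : ∀ x ∈ b, x ≤ -2)
    (hcomp : 1 / ncf a + 1 / ncf b = -1) :
    Istr a + Istr b = -2 :=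
  (Complementary.of_one_div_add_one_div ha hb hlea hleb hcomp).Istr_add_Istr
end

section
/- Let $\Gamma'$ be a star-shaped graph with central vertex $v$ of weight $w(v) \leq -1$ adjacent to one vertex $v_i$ in each of $k$ linear legs $\Gamma_1, \dots, \Gamma_k$, where every vertex of every leg has weight $\leq -2$. If the intersection matrix of $\Gamma'$ has determinant $0$, then either $w(v) > -k$ or $w(v_j) = -2$ for some $j$. -/
/-!
The intersection matrix is `diagonal (weights) + adjacency matrix` of the star-shaped tree.
Suppose `b ≤ -k` and every attaching vertex has weight `≤ -3`. Then every row is weakly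
diagonally dominant (`degree ≤ |weight|`), and strictly so at the centre when `k = 0` and at the
first vertex of every leg. If `x` is a kernel vector, the maximum of `|x|` propagates from a
weakly dominant vertex to all its neighbours, so it can be carried from the centre into a leg and
along the leg to its first vertex, where strict dominance forces `x = 0`.
-/

open Matrix

/-- The intersection matrix of a star-shaped weighted graph: a central vertex
(`none`) of weight `b`, and `k` linear legs; leg `i` is a path with `n i`
vertices of weights `w i 0, …, w i (n i - 1)` (consecutive vertices joined by
an edge), and the centre is joined by an edge to the vertex `t i` of leg `i`. -/
def starMat (k : ℕ) (b : ℤ) (n : Fin k → ℕ) (w : ∀ i, Fin (n i) → ℤ)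
    (t : ∀ i, Fin (n i)) :
    Matrix (Option ((i : Fin k) × Fin (n i))) (Option ((i : Fin k) × Fin (n i))) ℚ :=
  Matrix.of fun x y =>
    match x, y with
    | none, none => (b : ℚ)
    | none, some ⟨i, j⟩ => if j = t i then 1 else 0
    | some ⟨i, j⟩, none => if j = t i then 1 else 0
    | some ⟨i, j⟩, some ⟨i', j'⟩ =>
        if i = i' then
          if (j : ℕ) = (j' : ℕ) then (w i j : ℚ)
          else if (j : ℕ) + 1 = (j' : ℕ) ∨ (j' : ℕ) + 1 = (j : ℕ) then 1 else 0
        else 0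

open Finset

section WeightedGraph

variable {V R : Type*} [Fintype V] [DecidableEq V] {G : SimpleGraph V} [DecidableRel G.Adj]

theorem weight_mul_add_sum_neighborFinset_eq_zero [NonAssocSemiring R] {a x : V → R}
    (hx : (diagonal a + G.adjMatrix R) *ᵥ x = 0)
    (c : V) : a c * x c + ∑ d ∈ G.neighborFinset c, x d = 0 := by
  simpa [add_mulVec, mulVec_diagonal, SimpleGraph.adjMatrix_mulVec_apply] using congrFun hx c

variable [Field R] [LinearOrder R] [IsStrictOrderedRing R] {a x : V → R} {c : V}

theorem abs_weight_mul_le_sum_neighborFinset (hx : (diagonal a + G.adjMatrix R) *ᵥ x = 0)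
    (c : V) : |a c| * |x c| ≤ ∑ d ∈ G.neighborFinset c, |x d| := by
  rw [← abs_mul, eq_neg_of_add_eq_zero_left (weight_mul_add_sum_neighborFinset_eq_zero hx c),
    abs_neg]
  exact abs_sum_le_sum_abs _ _

theorem abs_weight_mul_le_degree_mul (hx : (diagonal a + G.adjMatrix R) *ᵥ x = 0)
    (hc : ∀ d, |x d| ≤ |x c|) : |a c| * |x c| ≤ G.degree c * |x c| := by
  calc |a c| * |x c| ≤ ∑ d ∈ G.neighborFinset c, |x d| :=
        abs_weight_mul_le_sum_neighborFinset hx c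
    _ ≤ ∑ _d ∈ G.neighborFinset c, |x c| := sum_le_sum fun d _ => hc d
    _ = G.degree c * |x c| := by
        rw [sum_const, SimpleGraph.card_neighborFinset_eq_degree, nsmul_eq_mul]

theorem eq_zero_of_degree_lt_abs_weight (hx : (diagonal a + G.adjMatrix R) *ᵥ x = 0)
    (hc : ∀ d, |x d| ≤ |x c|) (hdeg : (G.degree c : R) < |a c|) : x c = 0 := by
  by_contra h
  exact (le_of_mul_le_mul_right (abs_weight_mul_le_degree_mul hx hc) (abs_pos.2 h)).not_gt hdeg

theorem abs_eq_of_adj_of_degree_le_abs_weight (hx : (diagonal a + G.adjMatrix R) *ᵥ x = 0)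
    (hc : ∀ d, |x d| ≤ |x c|) (hdeg : (G.degree c : R) ≤ |a c|) {d : V} (hcd : G.Adj c d) :
    |x d| = |x c| := by
  have hsum : ∑ e ∈ G.neighborFinset c, (|x c| - |x e|) = 0 := by
    refine le_antisymm ?_ (sum_nonneg fun e _ => sub_nonneg.2 (hc e))
    rw [sum_sub_distrib, sum_const, SimpleGraph.card_neighborFinset_eq_degree, nsmul_eq_mul]
    nlinarith [abs_weight_mul_le_sum_neighborFinset hx c, abs_nonneg (x c)]
  have := (sum_eq_zero_iff_of_nonneg fun e _ => sub_nonneg.2 (hc e)).1 hsum d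
    ((G.mem_neighborFinset c d).2 hcd)
  linarith

end WeightedGraph

section StarGraph

variable {k : ℕ} {n : Fin k → ℕ}

def starAdj (t : ∀ i, Fin (n i)) : Option ((i : Fin k) × Fin (n i)) →
    Option ((i : Fin k) × Fin (n i)) → Prop
  | none, none => False
  | none, some ⟨i, j⟩ | some ⟨i, j⟩, none => j = t i
  | some ⟨i, j⟩, some ⟨i', j'⟩ => i = i' ∧ ((j : ℕ) + 1 = j' ∨ (j' : ℕ) + 1 = j)

def starGraph (t : ∀ i, Fin (n i)) : SimpleGraph (Option ((i : Fin k) × Fin (n i))) where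
  Adj := starAdj t
  symm := ⟨by
    rintro (_ | ⟨i, j⟩) (_ | ⟨i', j'⟩) h <;> simp only [starAdj] at h ⊢
    all_goals grind⟩
  loopless := ⟨by
    rintro (_ | ⟨i, j⟩) h <;> simp only [starAdj] at h
    omega⟩

@[simp]
theorem starGraph_adj (t : ∀ i, Fin (n i)) {u v : Option ((i : Fin k) × Fin (n i))} :
    (starGraph t).Adj u v ↔ starAdj t u v :=
  Iff.rfl

noncomputable instance (t : ∀ i, Fin (n i)) : DecidableRel (starGraph t).Adj :=
  Classical.decRel _

def starWeight (b : ℤ) (w : ∀ i, Fin (n i) → ℤ) : Option ((i : Fin k) × Fin (n i)) → ℚ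
  | none => b
  | some ⟨i, j⟩ => w i j

theorem starMat_eq_diagonal_add_adjMatrix (b : ℤ) (w : ∀ i, Fin (n i) → ℤ)
    (t : ∀ i, Fin (n i)) :
    starMat k b n w t = diagonal (starWeight b w) + (starGraph t).adjMatrix ℚ := by
  ext (_ | ⟨i, j⟩) (_ | ⟨i', j'⟩)
  · simp [starMat, starWeight]
  · simp [starMat, SimpleGraph.adjMatrix_apply, starAdj, eq_comm]
  · simp [starMat, SimpleGraph.adjMatrix_apply, starAdj]
  · by_cases hi : i = i'
    · subst hi
      by_cases hj : j = j'
      · subst hj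
        simp [starMat, starWeight]
      · simp [starMat, SimpleGraph.adjMatrix_apply, starAdj, hj, Fin.val_ne_of_ne hj]
    · simp [starMat, SimpleGraph.adjMatrix_apply, starAdj, hi]

theorem card_filter_succ_eq_or_eq_succ_le (m j : ℕ) :
    #{j' : Fin m | j + 1 = j' ∨ (j' : ℕ) + 1 = j} ≤ if j = 0 then 1 else 2 := by
  rw [← card_map Fin.valEmbedding]
  split_ifs
  · refine card_le_one.2 ?_
    simp only [mem_map, mem_filter, mem_univ, true_and, Fin.valEmbedding_apply,
      forall_exists_index, and_imp, forall_apply_eq_imp_iff₂]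
    omega
  · refine (card_le_card (t := {j + 1, j - 1}) ?_).trans card_le_two
    simp only [subset_iff, mem_map, mem_filter, mem_univ, true_and, Fin.valEmbedding_apply,
      mem_insert, mem_singleton, forall_exists_index, and_imp]
    omega

theorem starGraph_degree_none_le (t : ∀ i, Fin (n i)) : (starGraph t).degree none ≤ k := by
  rw [← SimpleGraph.card_neighborFinset_eq_degree]
  refine (card_le_card (t := univ.image fun i => some ⟨i, t i⟩) ?_).trans
    (card_image_le.trans (card_fin k).le)
  rintro (_ | ⟨i, j⟩) h
  · exact absurd ((SimpleGraph.mem_neighborFinset _ _ _).1 h) (SimpleGraph.irrefl _)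
  · simp only [SimpleGraph.mem_neighborFinset, starGraph_adj, starAdj] at h
    simp [h]

theorem starGraph_degree_some_le (t : ∀ i, Fin (n i)) (i : Fin k) (j : Fin (n i)) :
    (starGraph t).degree (some ⟨i, j⟩) ≤
      (if j = t i then 1 else 0) + if (j : ℕ) = 0 then 1 else 2 := by
  rw [← SimpleGraph.card_neighborFinset_eq_degree]
  let path : Finset (Fin (n i)) := {j' | (j : ℕ) + 1 = j' ∨ (j' : ℕ) + 1 = j}
  calc _ ≤ #((if j = t i then {none} else ∅) ∪
        path.image fun j' => some (⟨i, j'⟩ : (i : Fin k) × Fin (n i))) := by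
        refine card_le_card ?_
        rintro (_ | ⟨i', j'⟩) h <;>
          simp only [SimpleGraph.mem_neighborFinset, starGraph_adj, starAdj] at h
        · simp [h]
        · obtain ⟨rfl, h⟩ := h
          simp [path, h]
    _ ≤ _ := by
        refine card_union_le _ _ |>.trans (add_le_add (by split_ifs <;> simp) ?_)
        exact card_image_le.trans (card_filter_succ_eq_or_eq_succ_le _ _)

theorem starGraph_degree_add_le_abs_starWeight (b : ℤ) {w : ∀ i, Fin (n i) → ℤ}
    {t : ∀ i, Fin (n i)} (hw : ∀ i j, w i j ≤ -2) (ht : ∀ i, w i (t i) ≠ -2)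
    (i : Fin k) (j : Fin (n i)) :
    ((starGraph t).degree (some ⟨i, j⟩) : ℚ) + (if (j : ℕ) = 0 then 1 else 0) ≤
      |starWeight b w (some ⟨i, j⟩)| := by
  have hdeg := starGraph_degree_some_le t i j
  have hwj := hw i j
  have key : ((starGraph t).degree (some ⟨i, j⟩) : ℤ) + (if (j : ℕ) = 0 then 1 else 0) ≤
      -w i j := by
    have hwt : j = t i → w i j ≤ -3 := by rintro rfl; have := ht i; omega
    split_ifs at hdeg ⊢ <;> omega
  rw [starWeight, abs_of_neg (by exact_mod_cast (show w i j < 0 by omega))]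
  exact_mod_cast key

theorem starGraph_degree_none_add_le_abs_starWeight {b : ℤ} (w : ∀ i, Fin (n i) → ℤ)
    (t : ∀ i, Fin (n i)) (hb : b ≤ -1) (hbk : b ≤ -k) :
    ((starGraph t).degree none : ℚ) + (if k = 0 then 1 else 0) ≤ |starWeight b w none| := by
  have hdeg := starGraph_degree_none_le t
  have key : ((starGraph t).degree none : ℤ) + (if k = 0 then 1 else 0) ≤ -b := by
    split_ifs <;> omega
  rw [starWeight, abs_of_neg (by exact_mod_cast (show b < 0 by omega))]
  exact_mod_cast key

theorem leg_eq_zero_of_forall_abs_le {b : ℤ} {w : ∀ i, Fin (n i) → ℤ} {t : ∀ i, Fin (n i)}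
    (hw : ∀ i j, w i j ≤ -2) (ht : ∀ i, w i (t i) ≠ -2)
    {x : Option ((i : Fin k) × Fin (n i)) → ℚ}
    (hx : (diagonal (starWeight b w) + (starGraph t).adjMatrix ℚ) *ᵥ x = 0) (i : Fin k) :
    ∀ (j : ℕ) (hj : j < n i), (∀ e, |x e| ≤ |x (some ⟨i, ⟨j, hj⟩⟩)|) →
      x (some ⟨i, ⟨j, hj⟩⟩) = 0
  | 0, hj, hmax => eq_zero_of_degree_lt_abs_weight hx hmax <| (lt_add_one _).trans_le <| by
      simpa using starGraph_degree_add_le_abs_starWeight b hw ht i ⟨0, hj⟩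
  | j + 1, hj, hmax => by
      have hprev : |x (some ⟨i, ⟨j, by omega⟩⟩)| = |x (some ⟨i, ⟨j + 1, hj⟩⟩)| := by
        refine abs_eq_of_adj_of_degree_le_abs_weight hx hmax ?_ (by simp [starAdj])
        simpa using starGraph_degree_add_le_abs_starWeight b hw ht i ⟨j + 1, hj⟩
      rw [← abs_eq_zero, ← hprev, abs_eq_zero]
      exact leg_eq_zero_of_forall_abs_le hw ht hx i j _ (hprev ▸ hmax)

end StarGraph

/-- let `Γ'` be a star-shaped graph with central vertex `v` of
weight `b ≤ -1` joined to one vertex `t i` in each of `k` linear legs, all of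
whose vertices have weight `≤ -2`.  If the intersection matrix of `Γ'` has
determinant `0`, then `b > -k` or some attaching vertex has weight `-2`. -/
theorem stmt_9 (k : ℕ) (b : ℤ) (n : Fin k → ℕ) (w : ∀ i, Fin (n i) → ℤ)
    (t : ∀ i, Fin (n i))
    (hb : b ≤ -1)
    (hw : ∀ i (j : Fin (n i)), w i j ≤ -2)
    (hdet : (starMat k b n w t).det = 0) :
    -(k : ℤ) < b ∨ ∃ j : Fin k, w j (t j) = -2 := by
  by_contra! ⟨hbk, hne⟩
  rw [starMat_eq_diagonal_add_adjMatrix, ← exists_mulVec_eq_zero_iff] at hdet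
  obtain ⟨x, hx0, hx⟩ := hdet
  obtain ⟨c, hc⟩ := Finite.exists_max fun d => |x d|
  have hxc : x c ≠ 0 := fun h =>
    hx0 (funext fun d => abs_nonpos_iff.1 (by simpa [h] using hc d))
  have hcentre := starGraph_degree_none_add_le_abs_starWeight w t hb hbk
  obtain _ | ⟨i, j⟩ := c
  · obtain rfl | hk := k.eq_zero_or_pos
    · exact hxc (eq_zero_of_degree_lt_abs_weight hx hc
        ((lt_add_one _).trans_le (by simpa using hcentre)))
    · have hnbr := abs_eq_of_adj_of_degree_le_abs_weight hx hc (by simpa [hk.ne'] using hcentre)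
        (show (starGraph t).Adj none (some ⟨⟨0, hk⟩, t _⟩) by simp [starAdj])
      rw [leg_eq_zero_of_forall_abs_le hw hne hx _ _ _ (hnbr ▸ hc), abs_zero] at hnbr
      exact hxc (abs_eq_zero.1 hnbr.symm)
  · exact hxc (leg_eq_zero_of_forall_abs_le hw hne hx i j j.isLt hc)
end
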